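/- For n ≥ 2, define an action of the group G = (ℤ/2)^{n-1} on the product (S²)^n (where S² is the unit sphere in ℝ³) as follows: the element a = (a₁,…,a_{n-1}) ∈ G sends (x₁,…,x_n) to the point whose j-th coordinate is (−1)^{a_{j-1}+a_j} x_j, with the convention a₀ = a_n = 0. (Equivalently, the i-th standard generator of G acts by the antipodal map on the i-th and (i+1)-st sphere factors and by the identity on all other factors.) Then this is a well-defined free action of G on (S²)^n by diffeomorphisms, and it commutes with every action of the torus T^n = (S^1)^n on (S²)^n by coordinatewise orthogonal linear transformations. -/

import Mathlib

open scoped Manifold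

/-- The product `(S²)^n` of `n` copies of the unit 2-sphere in `ℝ³`. -/
abbrev SphereProd (n : ℕ) : Type :=
  Fin n → Metric.sphere (0 : EuclideanSpace ℝ (Fin 3)) 1

/-- `(-1)^c` for `c : ZMod 2`. -/
def signOf (c : ZMod 2) : ℝ := if c = 0 then 1 else -1

theorem abs_signOf (c : ZMod 2) : |signOf c| = 1 := by
  unfold signOf; split <;> norm_num

/-- The extension of `a : (ℤ/2)^{n-1}` (indexed by `1, …, n-1`) to all of `ℕ` by zero;
`extCoef n a i` is the `a_i` of the statement, with `a_0 = a_n = 0`. -/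
def extCoef (n : ℕ) (a : Fin (n - 1) → ZMod 2) (i : ℕ) : ZMod 2 :=
  if h : 1 ≤ i ∧ i ≤ n - 1 then a ⟨i - 1, by omega⟩ else 0

/-- The action of `a ∈ (ℤ/2)^{n-1}` on `(S²)^n` sending `(x₁, …, x_n)` to the point whose
`j`-th coordinate is `(-1)^{a_{j-1} + a_j} x_j` (with `a_0 = a_n = 0`); here `j : Fin n`
denotes the `(j+1)`-st coordinate. -/
noncomputable def flipAct (n : ℕ) (a : Fin (n - 1) → ZMod 2) (x : SphereProd n) : SphereProd n :=
  fun j => ⟨signOf (extCoef n a (j : ℕ) + extCoef n a ((j : ℕ) + 1)) •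
      (x j : EuclideanSpace ℝ (Fin 3)), by
    rw [mem_sphere_zero_iff_norm, norm_smul, Real.norm_eq_abs, abs_signOf,
      mem_sphere_zero_iff_norm.mp (x j).2, one_mul]⟩

/-- The coordinatewise action of the torus `(S¹)^n` on `(S²)^n` associated to a family of
continuous homomorphisms `S¹ → O(3)`, the orthogonal transformations of `ℝ³` being realized
as linear isometric equivalences. -/
noncomputable def torusAct (n : ℕ)
    (ρ : ∀ _ : Fin n, Circle →* (EuclideanSpace ℝ (Fin 3) ≃ₗᵢ[ℝ] EuclideanSpace ℝ (Fin 3)))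
    (t : Fin n → Circle) (x : SphereProd n) : SphereProd n :=
  fun j => ⟨ρ j (t j) (x j : EuclideanSpace ℝ (Fin 3)), by
    rw [mem_sphere_zero_iff_norm, LinearIsometryEquiv.norm_map]
    exact mem_sphere_zero_iff_norm.mp (x j).2⟩

section PiMap

variable {𝕜 : Type*} [NontriviallyNormedField 𝕜] {ι : Type*} [Fintype ι]
  {E E' : ι → Type*} [∀ i, NormedAddCommGroup (E i)] [∀ i, NormedSpace 𝕜 (E i)]
  [∀ i, NormedAddCommGroup (E' i)] [∀ i, NormedSpace 𝕜 (E' i)]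
  {H H' : ι → Type*} [∀ i, TopologicalSpace (H i)] [∀ i, TopologicalSpace (H' i)]
  {I : ∀ i, ModelWithCorners 𝕜 (E i) (H i)} {I' : ∀ i, ModelWithCorners 𝕜 (E' i) (H' i)}
  {M M' : ι → Type*} [∀ i, TopologicalSpace (M i)] [∀ i, ChartedSpace (H i) (M i)]
  [∀ i, TopologicalSpace (M' i)] [∀ i, ChartedSpace (H' i) (M' i)] {m : WithTop ℕ∞}

theorem ContMDiff.piMap {g : ∀ i, M i → M' i} (hg : ∀ i, ContMDiff (I i) (I' i) m (g i)) :
    ContMDiff (ModelWithCorners.pi I) (ModelWithCorners.pi I') m (Pi.map g) := by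
  intro x
  rw [contMDiffAt_iff]
  refine ⟨(continuous_pi fun i => (hg i).continuous.comp (continuous_apply i)).continuousAt,
    contDiffWithinAt_pi.2 fun i => ?_⟩
  have hchart : ContDiffWithinAt 𝕜 m
      ((extChartAt (I' i) (g i (x i)) ∘ g i ∘ (extChartAt (I i) (x i)).symm) ∘
        fun y : ∀ j, E j => y i)
      (Set.range (ModelWithCorners.pi I)) (extChartAt (ModelWithCorners.pi I) x x) := by
    refine ContDiffWithinAt.comp (t := Set.range (I i)) _ (contMDiffAt_iff.1 (hg i (x i))).2
      (ContinuousLinearMap.proj (R := 𝕜) (φ := E) i).contDiff.contDiffWithinAt ?_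
    rintro _ ⟨z, rfl⟩
    exact ⟨z i, rfl⟩
  exact hchart

end PiMap

def Function.Involutive.toDiffeomorph {𝕜 : Type*} [NontriviallyNormedField 𝕜]
    {E : Type*} [NormedAddCommGroup E] [NormedSpace 𝕜 E] {H : Type*} [TopologicalSpace H]
    {I : ModelWithCorners 𝕜 E H} {M : Type*} [TopologicalSpace M] [ChartedSpace H M]
    {m : WithTop ℕ∞} {f : M → M} (hf : Function.Involutive f) (hs : ContMDiff I I m f) :
    Diffeomorph I I M M m :=
  ⟨hf.toPerm f, hs, hs⟩

section SphereSMul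

variable {E : Type*} [NormedAddCommGroup E] [InnerProductSpace ℝ E]

def sphereSMul (c : ℝ) (hc : |c| = 1) (p : Metric.sphere (0 : E) 1) : Metric.sphere (0 : E) 1 :=
  ⟨c • (p : E), by
    rw [mem_sphere_zero_iff_norm, norm_smul, Real.norm_eq_abs, hc,
      mem_sphere_zero_iff_norm.mp p.2, one_mul]⟩

theorem contMDiff_sphereSMul {k : ℕ} [Fact (Module.finrank ℝ E = k + 1)] {m : WithTop ℕ∞}
    (c : ℝ) (hc : |c| = 1) : ContMDiff (𝓡 k) (𝓡 k) m (sphereSMul (E := E) c hc) :=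
  ((contMDiff_const (I' := 𝓘(ℝ, ℝ)) (c := c)).smul
    (contMDiff_coe_sphere (n := k))).codRestrict_sphere _

end SphereSMul

theorem signOf_add (c d : ZMod 2) : signOf (c + d) = signOf c * signOf d := by
  obtain rfl | rfl : c = 0 ∨ c = 1 := by revert c; decide
  all_goals obtain rfl | rfl : d = 0 ∨ d = 1 := by revert d; decide
  all_goals simp [signOf, show (1 + 1 : ZMod 2) = 0 from rfl]

theorem signOf_add_of_ne {c d : ZMod 2} (h : c ≠ d) : signOf (c + d) = -1 := by
  have hsum : c + d = 1 := by revert c d; decide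
  simp [signOf, hsum]

theorem extCoef_zero (n i : ℕ) : extCoef n 0 i = 0 := by
  unfold extCoef; split <;> rfl

theorem extCoef_add (n : ℕ) (a b : Fin (n - 1) → ZMod 2) (i : ℕ) :
    extCoef n (a + b) i = extCoef n a i + extCoef n b i := by
  unfold extCoef; split <;> simp

theorem extCoef_at_zero (n : ℕ) (a : Fin (n - 1) → ZMod 2) : extCoef n a 0 = 0 :=
  dif_neg (by omega)

theorem extCoef_succ (n : ℕ) (a : Fin (n - 1) → ZMod 2) (i : Fin (n - 1)) :
    extCoef n a (i + 1) = a i :=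
  dif_pos ⟨by omega, by omega⟩

-- As `a₀ = 0`, a sequence without jumps vanishes identically.
theorem exists_extCoef_ne_extCoef_succ {n : ℕ} {a : Fin (n - 1) → ZMod 2} (ha : a ≠ 0) :
    ∃ j < n, extCoef n a j ≠ extCoef n a (j + 1) := by
  by_contra! hconst
  have hzero : ∀ k ≤ n, extCoef n a k = 0 := by
    intro k hk
    induction k with
    | zero => exact extCoef_at_zero n a
    | succ k ih => rw [← hconst k (by omega), ih (by omega)]
  obtain ⟨i, hi⟩ := Function.ne_iff.mp ha
  exact hi (extCoef_succ n a i ▸ hzero (i + 1) (by omega))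

theorem flipAct_eq_piMap (n : ℕ) (a : Fin (n - 1) → ZMod 2) :
    flipAct n a =
      Pi.map fun j : Fin n =>
        sphereSMul (signOf (extCoef n a j + extCoef n a (j + 1))) (abs_signOf _) :=
  rfl

theorem coe_flipAct_apply (n : ℕ) (a : Fin (n - 1) → ZMod 2) (x : SphereProd n) (j : Fin n) :
    (flipAct n a x j : EuclideanSpace ℝ (Fin 3)) =
      signOf (extCoef n a j + extCoef n a (j + 1)) • (x j : EuclideanSpace ℝ (Fin 3)) :=
  rfl

theorem flipAct_zero (n : ℕ) (x : SphereProd n) : flipAct n 0 x = x := by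
  funext j
  ext1
  simp only [coe_flipAct_apply, extCoef_zero, add_zero, signOf, if_true, one_smul]

theorem flipAct_add (n : ℕ) (a b : Fin (n - 1) → ZMod 2) (x : SphereProd n) :
    flipAct n (a + b) x = flipAct n a (flipAct n b x) := by
  funext j
  ext1
  simp only [coe_flipAct_apply, smul_smul, ← signOf_add, extCoef_add]
  ring_nf

theorem flipAct_involutive (n : ℕ) (a : Fin (n - 1) → ZMod 2) :
    Function.Involutive (flipAct n a) := fun x => by
  rw [← flipAct_add, ZModModule.add_self, flipAct_zero]

theorem flipAct_ne_self {n : ℕ} {a : Fin (n - 1) → ZMod 2} (ha : a ≠ 0) (x : SphereProd n) :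
    flipAct n a x ≠ x := by
  obtain ⟨j, hj, hjump⟩ := exists_extCoef_ne_extCoef_succ ha
  have hflip : flipAct n a x ⟨j, hj⟩ = -x ⟨j, hj⟩ := by
    ext1
    rw [coe_flipAct_apply, signOf_add_of_ne hjump, neg_one_smul]
    rfl
  intro hfix
  rw [hfix] at hflip
  exact ne_neg_of_mem_unit_sphere ℝ _ hflip

theorem contMDiff_flipAct (n : ℕ) (a : Fin (n - 1) → ZMod 2) :
    ContMDiff (ModelWithCorners.pi fun _ : Fin n => 𝓡 2)
      (ModelWithCorners.pi fun _ : Fin n => 𝓡 2) ⊤ (flipAct n a) :=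
  have : Fact (Module.finrank ℝ (EuclideanSpace ℝ (Fin 3)) = 2 + 1) :=
    ⟨finrank_euclideanSpace_fin⟩
  flipAct_eq_piMap n a ▸ ContMDiff.piMap fun _ => contMDiff_sphereSMul _ _

theorem flipAct_torusAct_comm (n : ℕ)
    (ρ : ∀ _ : Fin n, Circle →* (EuclideanSpace ℝ (Fin 3) ≃ₗᵢ[ℝ] EuclideanSpace ℝ (Fin 3)))
    (a : Fin (n - 1) → ZMod 2) (t : Fin n → Circle) (x : SphereProd n) :
    flipAct n a (torusAct n ρ t x) = torusAct n ρ t (flipAct n a x) := by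
  funext j
  ext1
  exact (map_smul (ρ j (t j)) _ _).symm

theorem flipAct_is_free_action_by_diffeomorphisms_commuting_with_torus_general
    (n : ℕ) :
    (∀ x : SphereProd n, flipAct n 0 x = x) ∧
    (∀ (a b : Fin (n - 1) → ZMod 2) (x : SphereProd n),
      flipAct n (a + b) x = flipAct n a (flipAct n b x)) ∧
    (∀ a : Fin (n - 1) → ZMod 2, a ≠ 0 → ∀ x : SphereProd n, flipAct n a x ≠ x) ∧
    (∀ a : Fin (n - 1) → ZMod 2,
      ∃ D : Diffeomorph (ModelWithCorners.pi fun _ : Fin n => 𝓡 2)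
        (ModelWithCorners.pi fun _ : Fin n => 𝓡 2) (SphereProd n) (SphereProd n) ⊤,
        ∀ x : SphereProd n, D x = flipAct n a x) ∧
    (∀ (ρ : ∀ _ : Fin n,
        Circle →* (EuclideanSpace ℝ (Fin 3) ≃ₗᵢ[ℝ] EuclideanSpace ℝ (Fin 3))),
      (∀ j, Continuous fun p : Circle × EuclideanSpace ℝ (Fin 3) => ρ j p.1 p.2) →
      ∀ (a : Fin (n - 1) → ZMod 2) (t : Fin n → Circle) (x : SphereProd n),
        flipAct n a (torusAct n ρ t x) = torusAct n ρ t (flipAct n a x)) :=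
  ⟨flipAct_zero n, flipAct_add n, fun _ ha => flipAct_ne_self ha,
    fun a => ⟨(flipAct_involutive n a).toDiffeomorph (contMDiff_flipAct n a), fun _ => rfl⟩,
    fun ρ _ => flipAct_torusAct_comm n ρ⟩

/-- **Theorem.** For `n ≥ 2`, the maps `flipAct n a` define a free action of `(ℤ/2)^{n-1}`
on `(S²)^n` by diffeomorphisms, and this action commutes with every action of the torus
`(S¹)^n` on `(S²)^n` by coordinatewise orthogonal linear transformations. -/
theorem flipAct_is_free_action_by_diffeomorphisms_commuting_with_torus
    (n : ℕ) (hn : 2 ≤ n) :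
    (∀ x : SphereProd n, flipAct n 0 x = x) ∧
    (∀ (a b : Fin (n - 1) → ZMod 2) (x : SphereProd n),
      flipAct n (a + b) x = flipAct n a (flipAct n b x)) ∧
    (∀ a : Fin (n - 1) → ZMod 2, a ≠ 0 → ∀ x : SphereProd n, flipAct n a x ≠ x) ∧
    (∀ a : Fin (n - 1) → ZMod 2,
      ∃ D : Diffeomorph (ModelWithCorners.pi fun _ : Fin n => 𝓡 2)
        (ModelWithCorners.pi fun _ : Fin n => 𝓡 2) (SphereProd n) (SphereProd n) ⊤,
        ∀ x : SphereProd n, D x = flipAct n a x) ∧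
    (∀ (ρ : ∀ _ : Fin n,
        Circle →* (EuclideanSpace ℝ (Fin 3) ≃ₗᵢ[ℝ] EuclideanSpace ℝ (Fin 3))),
      (∀ j, Continuous fun p : Circle × EuclideanSpace ℝ (Fin 3) => ρ j p.1 p.2) →
      ∀ (a : Fin (n - 1) → ZMod 2) (t : Fin n → Circle) (x : SphereProd n),
        flipAct n a (torusAct n ρ t x) = torusAct n ρ t (flipAct n a x)) :=
  flipAct_is_free_action_by_diffeomorphisms_commuting_with_torus_general n
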